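/- arXiv:math/0505027 — 8 statements merged into one kernel-verified Lean document; each statement's English description precedes it below -/
import Mathlib

section
/- Let γ be a periodic orbit of period T > 0 of the C¹ planar system ẋ = P(x,y), ẏ = Q(x,y) on an open set U ⊆ ℝ². Suppose f : U → ℝ is C¹ with γ ⊆ {f = 0}, there is a C¹ function k with ∇f·(P,Q) = k·f on U, and every point p with f(p) = 0 and ∇f(p) = 0 is a singular point of the system. Then ∫₀ᵀ (∂P/∂x + ∂Q/∂y)(γ(t)) dt = ∫₀ᵀ k(γ(t)) dt. -/
/-!
Along `γ` the gradient of `f` annihilates the field `X = (P, Q)`, which does not vanish on the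
nonconstant orbit, so `∇f (γ t) = c t • (-Q, P) (γ t)`, and `c t ≠ 0` because zeros of `∇f` on
`f = 0` are singular points. Differentiating the invariance relation transversally to `γ` gives
`c' = (k - div) c`; as `c` is `T`-periodic, `∫₀ᵀ (k - div) = log |c T| - log |c 0| = 0`.
Since `f` is only `C¹`, `c'` is computed as the limit of the difference quotients
`z⁻¹ f (γ t + z • N t)` along the transversal family `N = (-Q, P) ∘ γ`, by dominated convergence.
-/

open Set Filter Topology Metric MeasureTheory intervalIntegral

section Analysis

variable {E : Type*} [NormedAddCommGroup E] [NormedSpace ℝ E]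
variable {F : Type*} [NormedAddCommGroup F] [NormedSpace ℝ F]

theorem sub_eq_integral_of_tendsto_of_hasDerivAt [CompleteSpace F] {ι : Type*} {l : Filter ι}
    [l.IsCountablyGenerated] [l.NeBot] {φ H : ι → ℝ → F} {g e : ℝ → F} {bound : ℝ → ℝ} {a b : ℝ}
    (hφ : ∀ᶠ i in l, ∀ t ∈ uIcc a b, HasDerivAt (φ i) (H i t) t)
    (hH : ∀ᶠ i in l, IntervalIntegrable (H i) volume a b)
    (hbound : ∀ᶠ i in l, ∀ t ∈ uIcc a b, ‖H i t‖ ≤ bound t)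
    (hbound_int : IntervalIntegrable bound volume a b)
    (hφa : Tendsto (fun i ↦ φ i a) l (𝓝 (g a))) (hφb : Tendsto (fun i ↦ φ i b) l (𝓝 (g b)))
    (he : ∀ t ∈ uIcc a b, Tendsto (fun i ↦ H i t) l (𝓝 (e t))) :
    g b - g a = ∫ t in a..b, e t := by
  have hlim : Tendsto (fun i ↦ ∫ t in a..b, H i t) l (𝓝 (∫ t in a..b, e t)) :=
    tendsto_integral_filter_of_dominated_convergence bound
      (hH.mono fun _ hi ↦ hi.def'.aestronglyMeasurable)
      (hbound.mono fun _ hi ↦ ae_of_all _ fun t ht ↦ hi t (uIoc_subset_uIcc ht))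
      hbound_int (ae_of_all _ fun t ht ↦ he t (uIoc_subset_uIcc ht))
  refine tendsto_nhds_unique (hφb.sub hφa) (hlim.congr' ?_)
  filter_upwards [hφ, hH] with i hi hHi
  exact integral_eq_sub_of_hasDerivAt hi hHi

theorem hasDerivAt_of_eventually_sub_eq_integral [CompleteSpace F] {g e : ℝ → F} {t : ℝ}
    (he : Continuous e) (h : ∀ᶠ b in 𝓝 t, g b - g t = ∫ s in t..b, e s) :
    HasDerivAt g (e t) t := by
  have hI := (integral_hasDerivAt_right (IntervalIntegrable.refl (a := t))
    (he.stronglyMeasurableAtFilter _ _) he.continuousAt).const_add (g t)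
  refine hI.congr_of_eventuallyEq ?_
  filter_upwards [h] with b hb
  rw [← hb, add_sub_cancel]

theorem HasFDerivAt.tendsto_inv_smul_sub {G : E → F} {G' : E →L[ℝ] F} {p : E}
    (hG : HasFDerivAt G G' p) (v : E) :
    Tendsto (fun z : ℝ ↦ z⁻¹ • (G (p + z • v) - G p)) (𝓝[≠] 0) (𝓝 (G' v)) := by
  have hline : HasDerivAt (fun z : ℝ ↦ p + z • v) v 0 := by
    simpa using ((hasDerivAt_id (0 : ℝ)).smul_const v).const_add p
  have hd : HasDerivAt (fun z : ℝ ↦ G (p + z • v)) (G' v) 0 := by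
    refine HasFDerivAt.comp_hasDerivAt (l := G) 0 ?_ hline
    simpa using hG
  have hslope := hasDerivAt_iff_tendsto_slope.mp hd
  refine hslope.congr fun z ↦ ?_
  simp [slope_def_module]

theorem Convex.norm_inv_smul_sub_le {W : Set E} (hW : Convex ℝ W) {G : E → F}
    {G' : E → E →L[ℝ] F} {C : ℝ} (hG : ∀ q ∈ W, HasFDerivAt G (G' q) q)
    (hC : ∀ q ∈ W, ‖G' q‖ ≤ C) {p v : E} {z : ℝ} (hp : p ∈ W) (hpz : p + z • v ∈ W) :
    ‖z⁻¹ • (G (p + z • v) - G p)‖ ≤ C * ‖v‖ := by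
  have hmvt := hW.norm_image_sub_le_of_norm_hasFDerivWithin_le
    (fun q hq ↦ (hG q hq).hasFDerivWithinAt) hC hp hpz
  rcases eq_or_ne z 0 with rfl | hz
  · simpa using mul_nonneg ((norm_nonneg _).trans (hC p hp)) (norm_nonneg v)
  rw [add_sub_cancel_left, norm_smul] at hmvt
  rw [norm_smul, norm_inv]
  calc ‖z‖⁻¹ * ‖G (p + z • v) - G p‖ ≤ ‖z‖⁻¹ * (C * (‖z‖ * ‖v‖)) := by gcongr
    _ = C * ‖v‖ := by field_simp

theorem ContinuousAt.eventually_norm_le {α : Type*} [TopologicalSpace α] {G : Type*}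
    [SeminormedAddCommGroup G] {F : α → G} {a : α} (hF : ContinuousAt F a) :
    ∀ᶠ x in 𝓝 a, ‖F x‖ ≤ ‖F a‖ + 1 :=
  (hF.norm.eventually_lt continuousAt_const (lt_add_one _)).mono fun _ ↦ le_of_lt

section Invariant

variable {f k : E → ℝ} {f' : E → E →L[ℝ] ℝ} {X : E → E} {X' : E → E →L[ℝ] E}

/- The invariance identity at `p + z • v` is what keeps this quotient bounded as `z → 0`. -/
theorem inv_mul_apply_add_smul_eq {p v w : E} {z : ℝ} (hz : z ≠ 0) (hfp : f p = 0)
    (hinv : f' (p + z • v) (X (p + z • v)) = k (p + z • v) * f (p + z • v)) :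
    z⁻¹ * f' (p + z • v) (X p + z • w)
      = k (p + z • v) * (z⁻¹ • (f (p + z • v) - f p))
        - f' (p + z • v) (z⁻¹ • (X (p + z • v) - X p)) + f' (p + z • v) w := by
  rw [map_smul, map_sub, hinv, map_add, map_smul, hfp, smul_eq_mul, smul_eq_mul, smul_eq_mul]
  field_simp
  ring

theorem tendsto_inv_mul_apply_add_smul {p : E} (hf : HasFDerivAt f (f' p) p)
    (hX : HasFDerivAt X (X' p) p) (hf' : ContinuousAt f' p) (hk : ContinuousAt k p)
    (hinv : ∀ᶠ q in 𝓝 p, f' q (X q) = k q * f q) (hfp : f p = 0) (v w : E) :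
    Tendsto (fun z : ℝ ↦ z⁻¹ * f' (p + z • v) (X p + z • w)) (𝓝[≠] 0)
      (𝓝 (k p * f' p v + f' p (w - X' p v))) := by
  have hline : Tendsto (fun z : ℝ ↦ p + z • v) (𝓝[≠] 0) (𝓝 p) := by
    have hc : Continuous fun z : ℝ ↦ p + z • v := by fun_prop
    exact tendsto_nhdsWithin_of_tendsto_nhds (hc.tendsto' 0 p (by simp))
  have happly : Continuous fun x : (E →L[ℝ] ℝ) × E ↦ x.1 x.2 :=
    isBoundedBilinearMap_apply.continuous
  have hf'line := hf'.tendsto.comp hline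
  have hlim := ((hk.tendsto.comp hline).mul (hf.tendsto_inv_smul_sub v)).sub
    ((happly.tendsto _).comp (hf'line.prodMk_nhds (hX.tendsto_inv_smul_sub v))) |>.add
    ((happly.tendsto _).comp (hf'line.prodMk_nhds (tendsto_const_nhds (x := w))))
  rw [map_sub, ← add_sub_assoc, add_sub_right_comm]
  refine hlim.congr' ?_
  filter_upwards [hline.eventually hinv, self_mem_nhdsWithin] with z hz hz0
  exact (inv_mul_apply_add_smul_eq hz0 hfp hz).symm

theorem norm_inv_mul_apply_add_smul_le {W : Set E} (hW : Convex ℝ W)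
    (hf : ∀ q ∈ W, HasFDerivAt f (f' q) q) (hX : ∀ q ∈ W, HasFDerivAt X (X' q) q)
    (hinv : ∀ q ∈ W, f' q (X q) = k q * f q) {Cf CX Ck : ℝ} (hCf : ∀ q ∈ W, ‖f' q‖ ≤ Cf)
    (hCX : ∀ q ∈ W, ‖X' q‖ ≤ CX) (hCk : ∀ q ∈ W, ‖k q‖ ≤ Ck) {p v w : E} {z : ℝ}
    (hp : p ∈ W) (hpz : p + z • v ∈ W) (hfp : f p = 0) (hz : z ≠ 0) :
    ‖z⁻¹ * f' (p + z • v) (X p + z • w)‖ ≤ (Ck * Cf + Cf * CX) * ‖v‖ + Cf * ‖w‖ := by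
  have hCf0 : 0 ≤ Cf := (norm_nonneg _).trans (hCf p hp)
  have hCk0 : 0 ≤ Ck := (norm_nonneg _).trans (hCk p hp)
  have hfq := hW.norm_inv_smul_sub_le hf hCf hp hpz
  have hXq := hW.norm_inv_smul_sub_le hX hCX hp hpz
  rw [inv_mul_apply_add_smul_eq hz hfp (hinv _ hpz)]
  calc _ ≤ ‖k (p + z • v) * (z⁻¹ • (f (p + z • v) - f p))‖
          + ‖f' (p + z • v) (z⁻¹ • (X (p + z • v) - X p))‖ + ‖f' (p + z • v) w‖ :=
        (norm_add_le _ _).trans (add_le_add_left (norm_sub_le _ _) _)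
    _ ≤ Ck * (Cf * ‖v‖) + Cf * (CX * ‖v‖) + Cf * ‖w‖ := by
        rw [norm_mul]
        gcongr
        · exact hCk _ hpz
        · exact (f' _).le_of_opNorm_le (hCf _ hpz) _ |>.trans (by gcongr)
        · exact (f' _).le_of_opNorm_le (hCf _ hpz) _
    _ = (Ck * Cf + Cf * CX) * ‖v‖ + Cf * ‖w‖ := by ring

theorem apply_sub_apply_eq_integral_of_invariant {U W : Set E} (hU : IsOpen U)
    (hf : ∀ p ∈ U, HasFDerivAt f (f' p) p) (hf' : ContinuousOn f' U)
    (hX : ∀ p ∈ U, HasFDerivAt X (X' p) p) (hk : ContinuousOn k U)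
    (hinv : ∀ p ∈ U, f' p (X p) = k p * f p) {γ N N' : ℝ → E} (hγU : ∀ t, γ t ∈ U)
    (hγ : ∀ t, HasDerivAt γ (X (γ t)) t) (hγf : ∀ t, f (γ t) = 0)
    (hN : ∀ t, HasDerivAt N (N' t) t) (hN' : Continuous N') (hW : Convex ℝ W) (hWU : W ⊆ U)
    {Cf CX Ck : ℝ} (hCf : ∀ q ∈ W, ‖f' q‖ ≤ Cf) (hCX : ∀ q ∈ W, ‖X' q‖ ≤ CX)
    (hCk : ∀ q ∈ W, ‖k q‖ ≤ Ck) {S : Set ℝ} (hS : S ∈ 𝓝 0) {a b : ℝ}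
    (htube : ∀ z ∈ S, ∀ s ∈ uIcc a b, γ s + z • N s ∈ W) :
    f' (γ b) (N b) - f' (γ a) (N a)
      = ∫ s in a..b, k (γ s) * f' (γ s) (N s) + f' (γ s) (N' s - X' (γ s) (N s)) := by
  have hγc : Continuous γ := continuous_iff_continuousAt.2 fun s ↦ (hγ s).continuousAt
  have hNc : Continuous N := continuous_iff_continuousAt.2 fun s ↦ (hN s).continuousAt
  have hzS : ∀ᶠ z in 𝓝[≠] (0 : ℝ), z ∈ S ∧ z ≠ 0 :=
    Eventually.and (mem_nhdsWithin_of_mem_nhds hS) self_mem_nhdsWithin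
  refine sub_eq_integral_of_tendsto_of_hasDerivAt (l := 𝓝[≠] (0 : ℝ))
    (g := fun s ↦ f' (γ s) (N s)) (φ := fun z s ↦ z⁻¹ • (f (γ s + z • N s) - f (γ s)))
    (H := fun z s ↦ z⁻¹ * f' (γ s + z • N s) (X (γ s) + z • N' s))
    (bound := fun s ↦ (Ck * Cf + Cf * CX) * ‖N s‖ + Cf * ‖N' s‖) ?_ ?_ ?_ ?_ ?_ ?_ ?_
  · filter_upwards [hzS] with z hz s hs
    have hfs : HasDerivAt (fun s ↦ f (γ s)) 0 s := by
      simpa [hγf] using hasDerivAt_const s (0 : ℝ)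
    have hfz : HasDerivAt (fun s ↦ f (γ s + z • N s))
        (f' (γ s + z • N s) (X (γ s) + z • N' s)) s :=
      (hf _ (hWU (htube z hz.1 s hs))).comp_hasDerivAt s ((hγ s).add ((hN s).const_smul z))
    exact ((hfz.sub hfs).const_smul z⁻¹).congr_deriv (by rw [sub_zero, smul_eq_mul])
  · filter_upwards [hzS] with z hz
    have hXγ : Continuous fun s ↦ X (γ s) :=
      continuous_iff_continuousAt.2 fun s ↦ (hX _ (hγU s)).continuousAt.comp hγc.continuousAt
    refine (continuousOn_const.mul (ContinuousOn.clm_apply ?_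
      (hXγ.add (hN'.const_smul z)).continuousOn)).intervalIntegrable
    exact hf'.comp (by fun_prop : Continuous fun s ↦ γ s + z • N s).continuousOn
      fun s hs ↦ hWU (htube z hz.1 s hs)
  · filter_upwards [hzS] with z hz s hs
    have hγs : γ s ∈ W := by simpa using htube 0 (mem_of_mem_nhds hS) s hs
    exact norm_inv_mul_apply_add_smul_le hW (fun q hq ↦ hf q (hWU hq))
      (fun q hq ↦ hX q (hWU hq)) (fun q hq ↦ hinv q (hWU hq)) hCf hCX hCk hγs
      (htube z hz.1 s hs) (hγf s) hz.2
  · exact (by fun_prop : Continuous _).intervalIntegrable _ _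
  · simpa [hγf] using (hf _ (hγU a)).tendsto_inv_smul_sub (N a)
  · simpa [hγf] using (hf _ (hγU b)).tendsto_inv_smul_sub (N b)
  · intro s _
    have hγs : U ∈ 𝓝 (γ s) := hU.mem_nhds (hγU s)
    exact tendsto_inv_mul_apply_add_smul (hf _ (hγU s)) (hX _ (hγU s)) (hf'.continuousAt hγs)
      (hk.continuousAt hγs) (eventually_of_mem hγs hinv) (hγf s) (N s) (N' s)

theorem hasDerivAt_apply_of_invariant {U : Set E} (hU : IsOpen U)
    (hf : ∀ p ∈ U, HasFDerivAt f (f' p) p) (hf' : ContinuousOn f' U)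
    (hX : ∀ p ∈ U, HasFDerivAt X (X' p) p) (hX' : ContinuousOn X' U) (hk : ContinuousOn k U)
    (hinv : ∀ p ∈ U, f' p (X p) = k p * f p) {γ N N' : ℝ → E} (hγU : ∀ t, γ t ∈ U)
    (hγ : ∀ t, HasDerivAt γ (X (γ t)) t) (hγf : ∀ t, f (γ t) = 0)
    (hN : ∀ t, HasDerivAt N (N' t) t) (hN' : Continuous N') (t : ℝ) :
    HasDerivAt (fun s ↦ f' (γ s) (N s))
      (k (γ t) * f' (γ t) (N t) + f' (γ t) (N' t - X' (γ t) (N t))) t := by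
  have hγc : Continuous γ := continuous_iff_continuousAt.2 fun s ↦ (hγ s).continuousAt
  have hNc : Continuous N := continuous_iff_continuousAt.2 fun s ↦ (hN s).continuousAt
  have hf'γ := hf'.comp_continuous hγc hγU
  have he : Continuous fun s ↦ k (γ s) * f' (γ s) (N s) + f' (γ s) (N' s - X' (γ s) (N s)) :=
    ((hk.comp_continuous hγc hγU).mul (hf'γ.clm_apply hNc)).add
      (hf'γ.clm_apply (hN'.sub ((hX'.comp_continuous hγc hγU).clm_apply hNc)))
  have hγt : U ∈ 𝓝 (γ t) := hU.mem_nhds (hγU t)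
  obtain ⟨r, hr, hW⟩ := Metric.eventually_nhds_iff_ball.1
    (Eventually.and hγt (((hf'.continuousAt hγt).eventually_norm_le).and
      (((hX'.continuousAt hγt).eventually_norm_le).and (hk.continuousAt hγt).eventually_norm_le)))
  obtain ⟨S, hS, I, hI, hSI⟩ : ∃ S ∈ 𝓝 (0 : ℝ), ∃ I ∈ 𝓝 t,
      S ×ˢ I ⊆ (fun x : ℝ × ℝ ↦ γ x.2 + x.1 • N x.2) ⁻¹' ball (γ t) r := by
    refine mem_nhds_prod_iff.1 (ContinuousAt.preimage_mem_nhds (by fun_prop) ?_)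
    simpa using ball_mem_nhds _ hr
  obtain ⟨δ, hδ, hδI⟩ := Metric.mem_nhds_iff.1 hI
  refine hasDerivAt_of_eventually_sub_eq_integral he ?_
  filter_upwards [ball_mem_nhds t hδ] with b hb
  have hsub : uIcc t b ⊆ I :=
    ((Real.ball_eq_Ioo t δ ▸ ordConnected_Ioo).uIcc_subset (mem_ball_self hδ) hb).trans hδI
  exact apply_sub_apply_eq_integral_of_invariant hU hf hf' hX hk hinv hγU hγ hγf hN hN'
    (convex_ball _ _) (fun q hq ↦ (hW q hq).1) (fun q hq ↦ (hW q hq).2.1)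
    (fun q hq ↦ (hW q hq).2.2.1) (fun q hq ↦ (hW q hq).2.2.2) hS
    fun z hz s hs ↦ hSI (mk_mem_prod hz (hsub hs))

end Invariant

end Analysis

theorem vectorField_ne_zero_of_exists_ne {E : Type*} [NormedAddCommGroup E] [NormedSpace ℝ E]
    {U : Set E} (hU : IsOpen U) {X : E → E} (hX : ContDiffOn ℝ 1 X U) {γ : ℝ → E}
    (hγU : ∀ t, γ t ∈ U) (hγ : ∀ t, HasDerivAt γ (X (γ t)) t) (hnc : ∃ t₁ t₂, γ t₁ ≠ γ t₂)
    (t₀ : ℝ) : X (γ t₀) ≠ 0 := by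
  intro h₀
  have hγc : Continuous γ := continuous_iff_continuousAt.2 fun s ↦ (hγ s).continuousAt
  have hclopen : IsClopen {s | γ s = γ t₀} := by
    refine ⟨isClosed_eq hγc continuous_const,
      isOpen_iff_mem_nhds.2 fun t₁ (ht₁ : γ t₁ = γ t₀) ↦ ?_⟩
    obtain ⟨K, s, hs, hlip⟩ := (hX.contDiffAt (hU.mem_nhds (hγU t₁))).exists_lipschitzOnWith
    have hconst : γ =ᶠ[𝓝 t₁] fun _ ↦ γ t₁ :=
      ODE_solution_unique_of_eventually (v := fun _ ↦ X) (s := fun _ ↦ s)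
        (Eventually.of_forall fun _ ↦ hlip)
        (((hγc.tendsto t₁).eventually_mem hs).mono fun t ht ↦ ⟨hγ t, ht⟩)
        (Eventually.of_forall fun t ↦ ⟨by rw [ht₁, h₀]; exact hasDerivAt_const t _,
          mem_of_mem_nhds hs⟩) rfl
    filter_upwards [hconst] with s hs
    exact hs.trans ht₁
  obtain ⟨t₁, t₂, hne⟩ := hnc
  have hconst (t : ℝ) : γ t = γ t₀ := (hclopen.eq_univ ⟨t₀, rfl⟩).ge (mem_univ t)
  exact hne ((hconst t₁).trans (hconst t₂).symm)

theorem apply_eq_zero_of_comp_eq_zero {E : Type*} [NormedAddCommGroup E] [NormedSpace ℝ E]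
    {f : E → ℝ} {L : E →L[ℝ] ℝ} {γ : ℝ → E} {v : E} {t : ℝ} (hf : HasFDerivAt f L (γ t))
    (hγ : HasDerivAt γ v t) (hγf : ∀ s, f (γ s) = 0) : L v = 0 :=
  (hf.comp_hasDerivAt t hγ).unique (by simpa [Function.comp_def, hγf] using hasDerivAt_const t 0)

theorem integral_eq_zero_of_hasDerivAt_mul {h m : ℝ → ℝ} {a b : ℝ}
    (hh : ∀ t, HasDerivAt h (m t * h t) t) (hh₀ : ∀ t, h t ≠ 0)
    (hm : IntervalIntegrable m volume a b) (hab : h b = h a) : ∫ t in a..b, m t = 0 := by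
  have hlog : ∀ t ∈ uIcc a b, HasDerivAt (fun s ↦ Real.log (h s)) (m t) t := fun t _ ↦ by
    simpa [hh₀ t] using (hh t).log (hh₀ t)
  rw [integral_eq_sub_of_hasDerivAt hlog hm, hab, sub_self]

section Planar

theorem ContinuousLinearMap.apply_eq_fst_mul_add_snd_mul (L : ℝ × ℝ →L[ℝ] ℝ) (v : ℝ × ℝ) :
    L v = v.1 * L (1, 0) + v.2 * L (0, 1) := by
  conv_lhs => rw [show v = v.1 • ((1 : ℝ), (0 : ℝ)) + v.2 • ((0 : ℝ), (1 : ℝ)) by ext <;> simp]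
  rw [map_add, map_smul, map_smul, smul_eq_mul, smul_eq_mul]

theorem apply_mul_normSq_eq_of_apply_eq_zero (L : ℝ × ℝ →L[ℝ] ℝ) {a b : ℝ} (h : L (a, b) = 0)
    (v : ℝ × ℝ) : L v * (a ^ 2 + b ^ 2) = L (-b, a) * (a * v.2 - b * v.1) := by
  rw [L.apply_eq_fst_mul_add_snd_mul] at h ⊢
  rw [L.apply_eq_fst_mul_add_snd_mul (-b, a)]
  linear_combination (a * v.1 + b * v.2) * h

/- For `(a, b) = X (γ t)`, `A = DP`, `B = DQ`, the argument of `L` is `N' - DX · N` for the normal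
`N = (-Q, P) ∘ γ`, and the right side is `L N · (ρ' - div · ρ)` with `ρ = a ^ 2 + b ^ 2`. -/
theorem apply_rotate_deriv_sub_mul_normSq (L A B : ℝ × ℝ →L[ℝ] ℝ) {a b : ℝ} (h : L (a, b) = 0) :
    L ((-B (a, b), A (a, b)) - (A (-b, a), B (-b, a))) * (a ^ 2 + b ^ 2)
      = L (-b, a)
        * (2 * (a * A (a, b) + b * B (a, b)) - (A (1, 0) + B (0, 1)) * (a ^ 2 + b ^ 2)) := by
  rw [apply_mul_normSq_eq_of_apply_eq_zero L h, A.apply_eq_fst_mul_add_snd_mul (a, b),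
    A.apply_eq_fst_mul_add_snd_mul (-b, a), B.apply_eq_fst_mul_add_snd_mul (a, b),
    B.apply_eq_fst_mul_add_snd_mul (-b, a)]
  simp only [Prod.fst_sub, Prod.snd_sub]
  ring

theorem eq_zero_of_apply_eq_zero_of_apply_rotate_eq_zero {L : ℝ × ℝ →L[ℝ] ℝ} {a b : ℝ}
    (h : L (a, b) = 0) (h' : L (-b, a) = 0) (hab : a ^ 2 + b ^ 2 ≠ 0) : L = 0 :=
  ContinuousLinearMap.ext fun v ↦ by
    simpa [hab, h'] using apply_mul_normSq_eq_of_apply_eq_zero L h v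

variable {U : Set (ℝ × ℝ)} {P Q f k : ℝ × ℝ → ℝ} {γ : ℝ → ℝ × ℝ}

theorem hasDerivAt_fderiv_rotate_div_normSq (hU : IsOpen U) (hP : ContDiffOn ℝ 1 P U)
    (hQ : ContDiffOn ℝ 1 Q U) (hf : ContDiffOn ℝ 1 f U) (hk : ContinuousOn k U)
    (hinv : ∀ p ∈ U, fderiv ℝ f p (P p, Q p) = k p * f p) (hγU : ∀ t, γ t ∈ U)
    (hγ : ∀ t, HasDerivAt γ (P (γ t), Q (γ t)) t) (hγf : ∀ t, f (γ t) = 0) {t : ℝ}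
    (ht : P (γ t) ^ 2 + Q (γ t) ^ 2 ≠ 0) :
    HasDerivAt (fun s ↦ fderiv ℝ f (γ s) (-Q (γ s), P (γ s)) / (P (γ s) ^ 2 + Q (γ s) ^ 2))
      ((k (γ t) - (fderiv ℝ P (γ t) (1, 0) + fderiv ℝ Q (γ t) (0, 1)))
        * (fderiv ℝ f (γ t) (-Q (γ t), P (γ t)) / (P (γ t) ^ 2 + Q (γ t) ^ 2))) t := by
  have hd {G : Type} [NormedAddCommGroup G] [NormedSpace ℝ G] {F : ℝ × ℝ → G}
      (hF : ContDiffOn ℝ 1 F U) (p : ℝ × ℝ) (hp : p ∈ U) :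
      HasFDerivAt F (fderiv ℝ F p) p :=
    (hF.differentiableOn one_ne_zero).hasFDerivAt (hU.mem_nhds hp)
  have hPγ (s : ℝ) := (hd hP _ (hγU s)).comp_hasDerivAt s (hγ s)
  have hQγ (s : ℝ) := (hd hQ _ (hγU s)).comp_hasDerivAt s (hγ s)
  have hX : ContDiffOn ℝ 1 (fun p ↦ (P p, Q p)) U := hP.prodMk hQ
  have hγc : Continuous γ := continuous_iff_continuousAt.2 fun s ↦ (hγ s).continuousAt
  have hXγ := hX.continuousOn.comp_continuous hγc hγU
  have hD {F : ℝ × ℝ → ℝ} (hF : ContDiffOn ℝ 1 F U) :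
      Continuous fun s ↦ fderiv ℝ F (γ s) (P (γ s), Q (γ s)) :=
    ((hF.continuousOn_fderiv_of_isOpen hU le_rfl).comp_continuous hγc hγU).clm_apply hXγ
  have hg := hasDerivAt_apply_of_invariant hU (hd hf) (hf.continuousOn_fderiv_of_isOpen hU le_rfl)
    (hd hX) (hX.continuousOn_fderiv_of_isOpen hU le_rfl) hk hinv hγU hγ hγf
    (fun s ↦ (hQγ s).neg.prodMk (hPγ s)) ((hD hQ).neg.prodMk (hD hP)) t
  rw [DifferentiableAt.fderiv_prodMk (hd hP _ (hγU t)).differentiableAt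
    (hd hQ _ (hγU t)).differentiableAt] at hg
  have hρ := ((hPγ t).pow 2).add ((hQγ t).pow 2)
  have horth := apply_eq_zero_of_comp_eq_zero (hd hf _ (hγU t)) (hγ t) hγf
  have key := apply_rotate_deriv_sub_mul_normSq (fderiv ℝ f (γ t)) (fderiv ℝ P (γ t))
    (fderiv ℝ Q (γ t)) horth
  refine (hg.div hρ ht).congr_deriv ?_
  simp only [Function.comp_apply, Pi.add_apply, Pi.pow_apply, Pi.neg_apply,
    ContinuousLinearMap.prod_apply, Nat.cast_ofNat, Nat.add_one_sub_one, pow_one] at key ⊢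
  rw [div_eq_iff (pow_ne_zero 2 ht), mul_div_assoc', div_mul_eq_mul_div, eq_div_iff ht]
  linear_combination (P (γ t) ^ 2 + Q (γ t) ^ 2) * key

end Planar

theorem stmt_2_general (U : Set (ℝ × ℝ)) (hU : IsOpen U)
    (P Q f k : ℝ × ℝ → ℝ)
    (hP : ContDiffOn ℝ 1 P U) (hQ : ContDiffOn ℝ 1 Q U)
    (hf : ContDiffOn ℝ 1 f U) (hk : ContDiffOn ℝ 1 k U)
    (γ : ℝ → ℝ × ℝ) (T : ℝ)
    (hγU : ∀ t, γ t ∈ U)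
    (hγ : ∀ t, HasDerivAt γ (P (γ t), Q (γ t)) t)
    (hper : Function.Periodic γ T)
    (hnc : ∃ t₁ t₂ : ℝ, γ t₁ ≠ γ t₂)
    (hγf : ∀ t, f (γ t) = 0)
    (hinv : ∀ p ∈ U, P p * fderiv ℝ f p (1, 0) + Q p * fderiv ℝ f p (0, 1)
      = k p * f p)
    (hsing : ∀ p ∈ U, f p = 0 → fderiv ℝ f p = 0 → P p = 0 ∧ Q p = 0) :
    ∫ t in (0:ℝ)..T, (fderiv ℝ P (γ t) (1, 0) + fderiv ℝ Q (γ t) (0, 1))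
      = ∫ t in (0:ℝ)..T, k (γ t) := by
  have hρ (t : ℝ) : P (γ t) ^ 2 + Q (γ t) ^ 2 ≠ 0 := fun hρ₀ ↦
    vectorField_ne_zero_of_exists_ne hU (hP.prodMk hQ) hγU hγ hnc t <| by
      ext <;> simp only [Prod.fst_zero, Prod.snd_zero] <;>
        nlinarith [sq_nonneg (P (γ t)), sq_nonneg (Q (γ t))]
  have hh (t : ℝ) := hasDerivAt_fderiv_rotate_div_normSq hU hP hQ hf hk.continuousOn
    (fun p hp ↦ (ContinuousLinearMap.apply_eq_fst_mul_add_snd_mul _ _).trans (hinv p hp))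
    hγU hγ hγf (hρ t)
  have hh₀ (t : ℝ) : fderiv ℝ f (γ t) (-Q (γ t), P (γ t)) / (P (γ t) ^ 2 + Q (γ t) ^ 2) ≠ 0 := by
    rw [div_ne_zero_iff]
    refine ⟨fun hg ↦ hρ t ?_, hρ t⟩
    obtain ⟨hP₀, hQ₀⟩ := hsing _ (hγU t) (hγf t) <|
      eq_zero_of_apply_eq_zero_of_apply_rotate_eq_zero (apply_eq_zero_of_comp_eq_zero
        ((hf.differentiableOn one_ne_zero).hasFDerivAt (hU.mem_nhds (hγU t))) (hγ t) hγf) hg (hρ t)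
    simp [hP₀, hQ₀]
  have hγc : Continuous γ := continuous_iff_continuousAt.2 fun t ↦ (hγ t).continuousAt
  have hD {F : ℝ × ℝ → ℝ} (hF : ContDiffOn ℝ 1 F U) (v : ℝ × ℝ) :
      Continuous fun t ↦ fderiv ℝ F (γ t) v :=
    ((hF.continuousOn_fderiv_of_isOpen hU le_rfl).comp_continuous hγc hγU).clm_apply
      continuous_const
  have hkγ : Continuous fun t ↦ k (γ t) := hk.continuousOn.comp_continuous hγc hγU
  have hdiv : Continuous fun t ↦ fderiv ℝ P (γ t) (1, 0) + fderiv ℝ Q (γ t) (0, 1) :=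
    (hD hP _).add (hD hQ _)
  have hzero := integral_eq_zero_of_hasDerivAt_mul hh hh₀ ((hkγ.sub hdiv).intervalIntegrable 0 T)
    (by simp only [show γ T = γ 0 by simpa using hper 0])
  rw [intervalIntegral.integral_sub (hkγ.intervalIntegrable 0 T)
    (hdiv.intervalIntegrable 0 T)] at hzero
  linarith

/-- For a periodic orbit `γ` of period `T > 0` of the system `ẋ = P, ẏ = Q` contained
in an invariant curve `f = 0` with cofactor `k` (such that every point where `f` and
`∇f` both vanish is a singular point), the integral of the divergence along `γ` equals
the integral of the cofactor `k` along `γ`. -/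
theorem stmt_2 (U : Set (ℝ × ℝ)) (hU : IsOpen U)
    (P Q f k : ℝ × ℝ → ℝ)
    (hP : ContDiffOn ℝ 1 P U) (hQ : ContDiffOn ℝ 1 Q U)
    (hf : ContDiffOn ℝ 1 f U) (hk : ContDiffOn ℝ 1 k U)
    (γ : ℝ → ℝ × ℝ) (T : ℝ) (hT : 0 < T)
    (hγU : ∀ t, γ t ∈ U)
    (hγ : ∀ t, HasDerivAt γ (P (γ t), Q (γ t)) t)
    (hper : Function.Periodic γ T)
    (hnc : ∃ t₁ t₂ : ℝ, γ t₁ ≠ γ t₂)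
    (hγf : ∀ t, f (γ t) = 0)
    (hinv : ∀ p ∈ U, P p * fderiv ℝ f p (1, 0) + Q p * fderiv ℝ f p (0, 1)
      = k p * f p)
    (hsing : ∀ p ∈ U, f p = 0 → fderiv ℝ f p = 0 → P p = 0 ∧ Q p = 0) :
    ∫ t in (0:ℝ)..T, (fderiv ℝ P (γ t) (1, 0) + fderiv ℝ Q (γ t) (0, 1))
      = ∫ t in (0:ℝ)..T, k (γ t) :=
  stmt_2_general U hU P Q f k hP hQ hf hk γ T hγU hγ hper hnc hγf hinv hsing
end

section
/- Let γ be a periodic orbit of period T > 0 of the C¹ planar system ẋ = P, ẏ = Q, and let x = F(u,v), y = G(u,v) be a C² diffeomorphic change of variables defined on a neighborhood of γ with nonvanishing Jacobian J, transforming the system into u̇ = R, v̇ = S with corresponding periodic orbit ϑ. Then ∫₀ᵀ (∂P/∂x + ∂Q/∂y)(γ(t)) dt = ∫₀ᵀ (∂R/∂u + ∂S/∂v)(ϑ(t)) dt. -/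
/-!
Write `Φ = (F, G)` and `J = det DΦ`. Differentiating the conjugacy relation `DΦ · (R, S) = (P, Q) ∘ Φ`
and contracting with the adjugate of `DΦ` (Jacobi's formula) shows that along the transformed orbit
`d/dt J(ϑ t) = (div (P, Q) (γ t) - div (R, S) (ϑ t)) · J(ϑ t)`. Hence the difference of the two
integrands is the derivative of `log |J(ϑ t)|`, whose integral over a period vanishes because
`ϑ` is itself `T`-periodic, `Φ` being injective.
-/

open Filter Topology

noncomputable def planarDivergence (P Q : ℝ × ℝ → ℝ) (p : ℝ × ℝ) : ℝ :=
  fderiv ℝ P p (1, 0) + fderiv ℝ Q p (0, 1)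

noncomputable def planarJacobian (F G : ℝ × ℝ → ℝ) (p : ℝ × ℝ) : ℝ :=
  fderiv ℝ F p (1, 0) * fderiv ℝ G p (0, 1) - fderiv ℝ F p (0, 1) * fderiv ℝ G p (1, 0)

theorem ContinuousLinearMap.map_prodMk_eq {E : Type*} [NormedAddCommGroup E] [NormedSpace ℝ E]
    (φ : ℝ × ℝ →L[ℝ] E) (x y : ℝ) : φ (x, y) = x • φ (1, 0) + y • φ (0, 1) := by
  rw [← map_smul, ← map_smul, ← map_add]
  simp

theorem fderiv_fderiv_apply_add_fderiv_apply_eq {E F : Type*}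
    [NormedAddCommGroup E] [NormedSpace ℝ E] [NormedAddCommGroup F] [NormedSpace ℝ F]
    {A : E → F} {X : E → E} {g : E → F} {p : E} (hA : ContDiffAt ℝ 2 A p)
    (hX : DifferentiableAt ℝ X p)
    (h : ∀ᶠ q in 𝓝 p, fderiv ℝ A q (X q) = g q) (w : E) :
    fderiv ℝ (fderiv ℝ A) p w (X p) + fderiv ℝ A p (fderiv ℝ X p w) = fderiv ℝ g p w := by
  have hA' : DifferentiableAt ℝ (fderiv ℝ A) p :=
    (hA.fderiv_right (m := 1) le_rfl).differentiableAt one_ne_zero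
  have hcomp := hA'.hasFDerivAt.clm_apply hX.hasFDerivAt
  rw [← Filter.EventuallyEq.fderiv_eq h, hcomp.fderiv]
  simp [add_comm]

theorem fderiv_fderiv_apply_prodMk_add_eq {A F G P R S : ℝ × ℝ → ℝ} {p : ℝ × ℝ}
    (hA : ContDiffAt ℝ 2 A p) (hF : DifferentiableAt ℝ F p) (hG : DifferentiableAt ℝ G p)
    (hR : DifferentiableAt ℝ R p) (hS : DifferentiableAt ℝ S p)
    (hP : DifferentiableAt ℝ P (F p, G p))
    (h : ∀ᶠ q in 𝓝 p, fderiv ℝ A q (1, 0) * R q + fderiv ℝ A q (0, 1) * S q = P (F q, G q))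
    (w : ℝ × ℝ) :
    fderiv ℝ (fderiv ℝ A) p w (R p, S p) + fderiv ℝ R p w * fderiv ℝ A p (1, 0)
        + fderiv ℝ S p w * fderiv ℝ A p (0, 1)
      = fderiv ℝ F p w * fderiv ℝ P (F p, G p) (1, 0)
        + fderiv ℝ G p w * fderiv ℝ P (F p, G p) (0, 1) := by
  have h' : ∀ᶠ q in 𝓝 p, fderiv ℝ A q (R q, S q) = P (F q, G q) := by
    filter_upwards [h] with q hq
    rw [(fderiv ℝ A q).map_prodMk_eq, smul_eq_mul, smul_eq_mul, mul_comm, mul_comm (S q), hq]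
  have key := fderiv_fderiv_apply_add_fderiv_apply_eq hA (hR.prodMk hS) h' w
  rw [DifferentiableAt.fderiv_prodMk hR hS, fderiv_fun_comp p hP (hF.prodMk hG),
    DifferentiableAt.fderiv_prodMk hF hG] at key
  simp only [ContinuousLinearMap.prod_apply, ContinuousLinearMap.comp_apply] at key
  rw [(fderiv ℝ A p).map_prodMk_eq (fderiv ℝ R p w),
    (fderiv ℝ P (F p, G p)).map_prodMk_eq (fderiv ℝ F p w)] at key
  simpa only [smul_eq_mul, add_assoc] using key

theorem hasDerivAt_fderiv_apply_comp {F : ℝ × ℝ → ℝ} {c : ℝ → ℝ × ℝ} {v : ℝ × ℝ} {t : ℝ}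
    (hc : HasDerivAt c v t) (hF : ContDiffAt ℝ 2 F (c t)) (w : ℝ × ℝ) :
    HasDerivAt (fun s => fderiv ℝ F (c s) w) (fderiv ℝ (fderiv ℝ F) (c t) v w) t := by
  have hF' := ((hF.fderiv_right (m := 1) le_rfl).differentiableAt one_ne_zero).hasFDerivAt
  simpa using (hF'.comp_hasDerivAt t hc).clm_apply (hasDerivAt_const t w)

theorem hasDerivAt_planarJacobian_comp {F G : ℝ × ℝ → ℝ} {c : ℝ → ℝ × ℝ} {v : ℝ × ℝ} {t : ℝ}
    (hc : HasDerivAt c v t) (hF : ContDiffAt ℝ 2 F (c t)) (hG : ContDiffAt ℝ 2 G (c t)) :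
    HasDerivAt (fun s => planarJacobian F G (c s))
      (fderiv ℝ (fderiv ℝ F) (c t) v (1, 0) * fderiv ℝ G (c t) (0, 1)
        + fderiv ℝ F (c t) (1, 0) * fderiv ℝ (fderiv ℝ G) (c t) v (0, 1)
        - (fderiv ℝ (fderiv ℝ F) (c t) v (0, 1) * fderiv ℝ G (c t) (1, 0)
          + fderiv ℝ F (c t) (0, 1) * fderiv ℝ (fderiv ℝ G) (c t) v (1, 0))) t :=
  ((hasDerivAt_fderiv_apply_comp hc hF _).mul (hasDerivAt_fderiv_apply_comp hc hG _)).sub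
    ((hasDerivAt_fderiv_apply_comp hc hF _).mul (hasDerivAt_fderiv_apply_comp hc hG _))

theorem directionalDeriv_planarJacobian_eq {F G P Q R S : ℝ × ℝ → ℝ} {p : ℝ × ℝ}
    (hF : ContDiffAt ℝ 2 F p) (hG : ContDiffAt ℝ 2 G p)
    (hR : DifferentiableAt ℝ R p) (hS : DifferentiableAt ℝ S p)
    (hP : DifferentiableAt ℝ P (F p, G p)) (hQ : DifferentiableAt ℝ Q (F p, G p))
    (hRS₁ : ∀ᶠ q in 𝓝 p, fderiv ℝ F q (1, 0) * R q + fderiv ℝ F q (0, 1) * S q = P (F q, G q))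
    (hRS₂ : ∀ᶠ q in 𝓝 p, fderiv ℝ G q (1, 0) * R q + fderiv ℝ G q (0, 1) * S q = Q (F q, G q)) :
    fderiv ℝ (fderiv ℝ F) p (R p, S p) (1, 0) * fderiv ℝ G p (0, 1)
        + fderiv ℝ F p (1, 0) * fderiv ℝ (fderiv ℝ G) p (R p, S p) (0, 1)
        - (fderiv ℝ (fderiv ℝ F) p (R p, S p) (0, 1) * fderiv ℝ G p (1, 0)
          + fderiv ℝ F p (0, 1) * fderiv ℝ (fderiv ℝ G) p (R p, S p) (1, 0))
      = (planarDivergence P Q (F p, G p) - planarDivergence R S p) * planarJacobian F G p := by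
  have hF₁ := hF.differentiableAt two_ne_zero
  have hG₁ := hG.differentiableAt two_ne_zero
  have hsymF := hF.isSymmSndFDerivAt (by simp)
  have hsymG := hG.isSymmSndFDerivAt (by simp)
  have eF₁ := fderiv_fderiv_apply_prodMk_add_eq hF hF₁ hG₁ hR hS hP hRS₁ (1, 0)
  have eF₂ := fderiv_fderiv_apply_prodMk_add_eq hF hF₁ hG₁ hR hS hP hRS₁ (0, 1)
  have eG₁ := fderiv_fderiv_apply_prodMk_add_eq hG hF₁ hG₁ hR hS hQ hRS₂ (1, 0)
  have eG₂ := fderiv_fderiv_apply_prodMk_add_eq hG hF₁ hG₁ hR hS hQ hRS₂ (0, 1)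
  rw [hsymF _ (1, 0), hsymF _ (0, 1), hsymG _ (1, 0), hsymG _ (0, 1)]
  unfold planarDivergence planarJacobian
  -- the coefficients are the entries of the adjugate of `DΦ p`
  linear_combination fderiv ℝ G p (0, 1) * eF₁ - fderiv ℝ G p (1, 0) * eF₂
    - fderiv ℝ F p (0, 1) * eG₁ + fderiv ℝ F p (1, 0) * eG₂

theorem intervalIntegral.integral_eq_zero_of_hasDerivAt_mul_self {f g : ℝ → ℝ} {a b : ℝ}
    (hf : ∀ t ∈ Set.uIcc a b, HasDerivAt f (g t * f t) t) (hf₀ : ∀ t ∈ Set.uIcc a b, f t ≠ 0)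
    (hg : IntervalIntegrable g MeasureTheory.volume a b) (hfab : f a = f b) :
    ∫ t in a..b, g t = 0 := by
  have hlog : ∀ t ∈ Set.uIcc a b, HasDerivAt (fun s => Real.log (f s)) (g t) t := fun t ht => by
    simpa [mul_div_cancel_right₀ _ (hf₀ t ht)] using (hf t ht).log (hf₀ t ht)
  rw [integral_eq_sub_of_hasDerivAt hlog hg, hfab, sub_self]

theorem continuousOn_planarDivergence {P Q : ℝ × ℝ → ℝ} {V : Set (ℝ × ℝ)} (hV : IsOpen V)
    (hP : ContDiffOn ℝ 1 P V) (hQ : ContDiffOn ℝ 1 Q V) :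
    ContinuousOn (planarDivergence P Q) V :=
  ((hP.continuousOn_fderiv_of_isOpen hV le_rfl).clm_apply continuousOn_const).add
    ((hQ.continuousOn_fderiv_of_isOpen hV le_rfl).clm_apply continuousOn_const)

theorem stmt_5_general (V : Set (ℝ × ℝ)) (hV : IsOpen V)
    (P Q : ℝ × ℝ → ℝ)
    (hP : ContDiff ℝ 1 P) (hQ : ContDiff ℝ 1 Q)
    (γ : ℝ → ℝ × ℝ) (T : ℝ)
    (hγ : ∀ t, HasDerivAt γ (P (γ t), Q (γ t)) t)
    (hper : Function.Periodic γ T)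
    (F G : ℝ × ℝ → ℝ)
    (hF : ContDiffOn ℝ 2 F V) (hG : ContDiffOn ℝ 2 G V)
    (hinj : Set.InjOn (fun p => (F p, G p)) V)
    (J : ℝ × ℝ → ℝ)
    (hJ : ∀ p ∈ V, J p = fderiv ℝ F p (1, 0) * fderiv ℝ G p (0, 1)
      - fderiv ℝ F p (0, 1) * fderiv ℝ G p (1, 0))
    (hJ0 : ∀ p ∈ V, J p ≠ 0)
    (R S : ℝ × ℝ → ℝ)
    (hR : ContDiffOn ℝ 1 R V) (hS : ContDiffOn ℝ 1 S V)
    -- `(R,S)` is the transformed vector field, given by the chain rule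
    (hRS1 : ∀ p ∈ V, fderiv ℝ F p (1, 0) * R p + fderiv ℝ F p (0, 1) * S p
      = P (F p, G p))
    (hRS2 : ∀ p ∈ V, fderiv ℝ G p (1, 0) * R p + fderiv ℝ G p (0, 1) * S p
      = Q (F p, G p))
    -- `ϑ` is the corresponding periodic orbit in the new variables
    (ϑ : ℝ → ℝ × ℝ)
    (hϑV : ∀ t, ϑ t ∈ V)
    (hϑγ : ∀ t, (F (ϑ t), G (ϑ t)) = γ t)
    (hϑ : ∀ t, HasDerivAt ϑ (R (ϑ t), S (ϑ t)) t) :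
    ∫ t in (0:ℝ)..T, (fderiv ℝ P (γ t) (1, 0) + fderiv ℝ Q (γ t) (0, 1))
      = ∫ t in (0:ℝ)..T, (fderiv ℝ R (ϑ t) (1, 0) + fderiv ℝ S (ϑ t) (0, 1)) := by
  have hγc : Continuous γ := continuous_iff_continuousAt.2 fun t => (hγ t).continuousAt
  have hϑc : Continuous ϑ := continuous_iff_continuousAt.2 fun t => (hϑ t).continuousAt
  have hdivPQ : Continuous fun t => planarDivergence P Q (γ t) :=
    (continuousOn_planarDivergence isOpen_univ hP.contDiffOn hQ.contDiffOn).comp_continuous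
      hγc fun _ => Set.mem_univ _
  have hdivRS : Continuous fun t => planarDivergence R S (ϑ t) :=
    (continuousOn_planarDivergence hV hR hS).comp_continuous hϑc hϑV
  have hϑper : ϑ T = ϑ 0 := hinj (hϑV T) (hϑV 0) <| by simpa only [hϑγ, zero_add] using hper 0
  have hjac (t : ℝ) : HasDerivAt (fun s => planarJacobian F G (ϑ s))
      ((planarDivergence P Q (γ t) - planarDivergence R S (ϑ t)) * planarJacobian F G (ϑ t)) t := by
    have hV_nhds := hV.mem_nhds (hϑV t)
    rw [← hϑγ t, ← directionalDeriv_planarJacobian_eq (hF.contDiffAt hV_nhds)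
      (hG.contDiffAt hV_nhds) ((hR.contDiffAt hV_nhds).differentiableAt one_ne_zero)
      ((hS.contDiffAt hV_nhds).differentiableAt one_ne_zero) (hP.differentiable one_ne_zero _)
      (hQ.differentiable one_ne_zero _) (eventually_of_mem hV_nhds hRS1)
      (eventually_of_mem hV_nhds hRS2)]
    exact hasDerivAt_planarJacobian_comp (hϑ t) (hF.contDiffAt hV_nhds) (hG.contDiffAt hV_nhds)
  have hzero := intervalIntegral.integral_eq_zero_of_hasDerivAt_mul_self (fun t _ => hjac t)
    (fun t _ => (hJ _ (hϑV t)).symm.trans_ne (hJ0 _ (hϑV t))) ((hdivPQ.sub hdivRS).intervalIntegrable 0 T)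
    (by rw [hϑper])
  rw [intervalIntegral.integral_sub (hdivPQ.intervalIntegrable 0 T)
    (hdivRS.intervalIntegrable 0 T)] at hzero
  exact sub_eq_zero.1 hzero

/-- The integral of the divergence along a periodic orbit is invariant under a `C²`
diffeomorphic change of variables `x = F(u,v)`, `y = G(u,v)` with nonvanishing
Jacobian, defined on a neighborhood of the orbit. -/
theorem stmt_5 (V : Set (ℝ × ℝ)) (hV : IsOpen V)
    (P Q : ℝ × ℝ → ℝ)
    (hP : ContDiff ℝ 1 P) (hQ : ContDiff ℝ 1 Q)
    (γ : ℝ → ℝ × ℝ) (T : ℝ) (hT : 0 < T)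
    (hγ : ∀ t, HasDerivAt γ (P (γ t), Q (γ t)) t)
    (hper : Function.Periodic γ T)
    (F G : ℝ × ℝ → ℝ)
    (hF : ContDiffOn ℝ 2 F V) (hG : ContDiffOn ℝ 2 G V)
    (hinj : Set.InjOn (fun p => (F p, G p)) V)
    (J : ℝ × ℝ → ℝ)
    (hJ : ∀ p ∈ V, J p = fderiv ℝ F p (1, 0) * fderiv ℝ G p (0, 1)
      - fderiv ℝ F p (0, 1) * fderiv ℝ G p (1, 0))
    (hJ0 : ∀ p ∈ V, J p ≠ 0)
    (R S : ℝ × ℝ → ℝ)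
    (hR : ContDiffOn ℝ 1 R V) (hS : ContDiffOn ℝ 1 S V)
    -- `(R,S)` is the transformed vector field, given by the chain rule
    (hRS1 : ∀ p ∈ V, fderiv ℝ F p (1, 0) * R p + fderiv ℝ F p (0, 1) * S p
      = P (F p, G p))
    (hRS2 : ∀ p ∈ V, fderiv ℝ G p (1, 0) * R p + fderiv ℝ G p (0, 1) * S p
      = Q (F p, G p))
    -- `ϑ` is the corresponding periodic orbit in the new variables
    (ϑ : ℝ → ℝ × ℝ)
    (hϑV : ∀ t, ϑ t ∈ V)
    (hϑγ : ∀ t, (F (ϑ t), G (ϑ t)) = γ t)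
    (hϑ : ∀ t, HasDerivAt ϑ (R (ϑ t), S (ϑ t)) t) :
    ∫ t in (0:ℝ)..T, (fderiv ℝ P (γ t) (1, 0) + fderiv ℝ Q (γ t) (0, 1))
      = ∫ t in (0:ℝ)..T, (fderiv ℝ R (ϑ t) (1, 0) + fderiv ℝ S (ϑ t) (0, 1)) :=
  stmt_5_general V hV P Q hP hQ γ T hγ hper F G hF hG hinj J hJ hJ0 R S hR hS hRS1 hRS2 ϑ hϑV hϑγ hϑ
end

section
/- The function H(x,y) = (y² − cos(x))·(x² + y²)·exp(2·arctan(y/x)) is a first integral of the system ẋ = (x+y)cos(x) − y(x²+xy+2y²), ẏ = (y−x)(cos(x)−y²) + ((x²+y²)/2)sin(x) on the open set {x ≠ 0}; that is, P·∂H/∂x + Q·∂H/∂y = 0 there. -/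
/-!
Writing `θ = arctan (y / x)`, one has `dθ = (x dy - y dx) / (x² + y²)` on `{x ≠ 0}`, and a direct
computation gives `dH = 2 e^{2θ} (Q dx - P dy)`. So `(P, Q)` is, up to the integrating factor
`2 e^{2θ}`, the Hamiltonian vector field `(-H_y, H_x)`, and `P H_x + Q H_y = 0` follows.
-/

open Real ContinuousLinearMap

theorem hasFDerivAt_arctan_div {p : ℝ × ℝ} (hx : p.1 ≠ 0) :
    HasFDerivAt (fun q : ℝ × ℝ => arctan (q.2 / q.1))
      ((p.1 ^ 2 + p.2 ^ 2)⁻¹ • (p.1 • snd ℝ ℝ ℝ - p.2 • fst ℝ ℝ ℝ)) p := by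
  have hinv := (hasDerivAt_inv hx).comp_hasFDerivAt p (hasFDerivAt_fst (𝕜 := ℝ) (p := p))
  refine ((hasFDerivAt_snd (𝕜 := ℝ) (p := p)).fun_mul hinv).arctan.congr_fderiv ?_
  ext <;> simp <;> field_simp

theorem hasFDerivAt_firstIntegral {p : ℝ × ℝ} (hx : p.1 ≠ 0) :
    HasFDerivAt
      (fun q : ℝ × ℝ => (q.2 ^ 2 - cos q.1) * (q.1 ^ 2 + q.2 ^ 2) * exp (2 * arctan (q.2 / q.1)))
      ((2 * exp (2 * arctan (p.2 / p.1))) •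
        (((p.2 - p.1) * (cos p.1 - p.2 ^ 2) + (p.1 ^ 2 + p.2 ^ 2) / 2 * sin p.1) • fst ℝ ℝ ℝ
          - ((p.1 + p.2) * cos p.1 - p.2 * (p.1 ^ 2 + p.1 * p.2 + 2 * p.2 ^ 2)) • snd ℝ ℝ ℝ))
      p := by
  have hfst := hasFDerivAt_fst (𝕜 := ℝ) (p := p)
  have hsnd := hasFDerivAt_snd (𝕜 := ℝ) (p := p)
  have hu := (hsnd.pow 2).fun_sub hfst.cos
  have hv := (hfst.pow 2).fun_add (hsnd.pow 2)
  refine ((hu.fun_mul hv).fun_mul ((hasFDerivAt_arctan_div hx).const_mul 2).exp).congr_fderiv ?_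
  have hr : p.1 ^ 2 + p.2 ^ 2 ≠ 0 := by positivity
  ext <;> simp <;> field_simp <;> ring

/-- `H(x,y) = (y² − cos x)(x² + y²) exp(2 arctan(y/x))` is a first integral of the
system `ẋ = (x+y)cos x − y(x²+xy+2y²)`,
`ẏ = (y−x)(cos x − y²) + ((x²+y²)/2) sin x` on the open set `{x ≠ 0}`. -/
theorem stmt_8
    (P Q H : ℝ × ℝ → ℝ)
    (hP : ∀ p : ℝ × ℝ, P p = (p.1 + p.2) * Real.cos p.1
      - p.2 * (p.1 ^ 2 + p.1 * p.2 + 2 * p.2 ^ 2))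
    (hQ : ∀ p : ℝ × ℝ, Q p = (p.2 - p.1) * (Real.cos p.1 - p.2 ^ 2)
      + (p.1 ^ 2 + p.2 ^ 2) / 2 * Real.sin p.1)
    (hH : ∀ p : ℝ × ℝ, H p = (p.2 ^ 2 - Real.cos p.1) * (p.1 ^ 2 + p.2 ^ 2)
      * Real.exp (2 * Real.arctan (p.2 / p.1))) :
    ∀ p : ℝ × ℝ, p.1 ≠ 0 →
      P p * fderiv ℝ H p (1, 0) + Q p * fderiv ℝ H p (0, 1) = 0 := by
  intro p hx
  rw [funext hH, (hasFDerivAt_firstIntegral hx).fderiv, hP, hQ]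
  simp only [smul_apply, sub_apply, coe_fst', coe_snd', smul_eq_mul]
  ring
end

section
/- The function V(x,y) = (x² + y²)·(y² − cos(x)) is an inverse integrating factor of the system ẋ = (x+y)cos(x) − y(x²+xy+2y²), ẏ = (y−x)(cos(x)−y²) + ((x²+y²)/2)sin(x); that is, P·∂V/∂x + Q·∂V/∂y = (∂P/∂x + ∂Q/∂y)·V identically on ℝ². -/
/-!
Both sides are computed from the partial derivatives of `P`, `Q`, `V`, each obtained as the
derivative of a one-variable function along a coordinate line; the identity is then
polynomial in `x`, `y`, `cos x`, `sin x` and holds without using `sin² + cos² = 1`.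
-/

open Real

section PartialDerivatives

variable {𝕜 F : Type*} [NontriviallyNormedField 𝕜] [NormedAddCommGroup F] [NormedSpace 𝕜 F]
  {f : 𝕜 × 𝕜 → F} {x y : 𝕜}

theorem fderiv_apply_one_zero (hf : DifferentiableAt 𝕜 f (x, y)) :
    fderiv 𝕜 f (x, y) (1, 0) = deriv (fun t => f (t, y)) x :=
  ((hf.hasFDerivAt.comp_hasDerivAt x ((hasDerivAt_id x).prodMk (hasDerivAt_const x y))).deriv).symm

theorem fderiv_apply_zero_one (hf : DifferentiableAt 𝕜 f (x, y)) :
    fderiv 𝕜 f (x, y) (0, 1) = deriv (fun t => f (x, t)) y :=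
  ((hf.hasFDerivAt.comp_hasDerivAt y ((hasDerivAt_const y x).prodMk (hasDerivAt_id y))).deriv).symm

end PartialDerivatives

theorem hasDerivAt_P_fst (x y : ℝ) :
    HasDerivAt (fun t => (t + y) * cos t - y * (t ^ 2 + t * y + 2 * y ^ 2))
      (cos x - (x + y) * sin x - y * (2 * x + y)) x := by
  have h := (((hasDerivAt_id x).add_const y).mul (hasDerivAt_cos x)).sub
    ((((hasDerivAt_pow 2 x).add ((hasDerivAt_id x).mul_const y)).add_const (2 * y ^ 2)).const_mul y)
  exact h.congr_deriv (by norm_num; ring)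

theorem hasDerivAt_Q_snd (x y : ℝ) :
    HasDerivAt (fun s => (s - x) * (cos x - s ^ 2) + (x ^ 2 + s ^ 2) / 2 * sin x)
      (cos x - y ^ 2 - 2 * y * (y - x) + y * sin x) y := by
  have h := (((hasDerivAt_id y).sub_const x).mul ((hasDerivAt_pow 2 y).const_sub (cos x))).add
    ((((hasDerivAt_pow 2 y).const_add (x ^ 2)).div_const 2).mul_const (sin x))
  exact h.congr_deriv (by norm_num; ring)

theorem hasDerivAt_V_fst (x y : ℝ) :
    HasDerivAt (fun t => (t ^ 2 + y ^ 2) * (y ^ 2 - cos t))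
      (2 * x * (y ^ 2 - cos x) + (x ^ 2 + y ^ 2) * sin x) x := by
  have h := ((hasDerivAt_pow 2 x).add_const (y ^ 2)).mul ((hasDerivAt_cos x).const_sub (y ^ 2))
  exact h.congr_deriv (by norm_num)

theorem hasDerivAt_V_snd (x y : ℝ) :
    HasDerivAt (fun s => (x ^ 2 + s ^ 2) * (s ^ 2 - cos x))
      (2 * y * (y ^ 2 - cos x) + 2 * y * (x ^ 2 + y ^ 2)) y := by
  have h := ((hasDerivAt_pow 2 y).const_add (x ^ 2)).mul ((hasDerivAt_pow 2 y).sub_const (cos x))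
  exact h.congr_deriv (by norm_num; ring)

/-- `V(x,y) = (x² + y²)(y² − cos x)` is an inverse integrating factor of the system
`ẋ = (x+y)cos x − y(x²+xy+2y²)`, `ẏ = (y−x)(cos x − y²) + ((x²+y²)/2) sin x`:
`P·V_x + Q·V_y = (P_x + Q_y)·V` identically on `ℝ²`. -/
theorem stmt_9
    (P Q V : ℝ × ℝ → ℝ)
    (hP : ∀ p : ℝ × ℝ, P p = (p.1 + p.2) * Real.cos p.1
      - p.2 * (p.1 ^ 2 + p.1 * p.2 + 2 * p.2 ^ 2))
    (hQ : ∀ p : ℝ × ℝ, Q p = (p.2 - p.1) * (Real.cos p.1 - p.2 ^ 2)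
      + (p.1 ^ 2 + p.2 ^ 2) / 2 * Real.sin p.1)
    (hV : ∀ p : ℝ × ℝ, V p = (p.1 ^ 2 + p.2 ^ 2) * (p.2 ^ 2 - Real.cos p.1)) :
    ∀ p : ℝ × ℝ, P p * fderiv ℝ V p (1, 0) + Q p * fderiv ℝ V p (0, 1)
      = (fderiv ℝ P p (1, 0) + fderiv ℝ Q p (0, 1)) * V p := by
  obtain rfl := funext hP
  obtain rfl := funext hQ
  obtain rfl := funext hV
  rintro ⟨x, y⟩
  rw [fderiv_apply_one_zero (by fun_prop), fderiv_apply_zero_one (by fun_prop),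
    fderiv_apply_one_zero (by fun_prop), fderiv_apply_zero_one (by fun_prop),
    (hasDerivAt_V_fst x y).deriv, (hasDerivAt_V_snd x y).deriv,
    (hasDerivAt_P_fst x y).deriv, (hasDerivAt_Q_snd x y).deriv]
  ring
end

section
/- For the Filipstov system ẋ = 6(1+a)x + 2y − 6(2+a)x² + 12xy, ẏ = 15(1+a)y + 3a(1+a)x² − 2(9+5a)xy + 16y², the quartic f(x,y) = 3(1+a)(ax² + y)² + 2y²(2y − 3(1+a)x) is an invariant algebraic curve; that is, P·f_x + Q·f_y = k·f for some polynomial cofactor k(x,y). -/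
/-!
With the affine cofactor `k = 30(1+a) − 24(2+a)x + 48y`, the invariance identity
`P·∂ₓf + Q·∂ᵧf = k·f` is an identity of polynomials, valid over any commutative ring. Since the
Fréchet derivative of a polynomial function is given by its formal partial derivatives, the
identity carries over to the functions.
-/

open MvPolynomial

namespace MvPolynomial

@[simp]
theorem pderiv_ofNat {R σ : Type*} [CommSemiring R] (i : σ) (n : ℕ) [n.AtLeastTwo] :
    pderiv i (ofNat(n) : MvPolynomial σ R) = 0 := by
  rw [← Nat.cast_ofNat (R := MvPolynomial σ R) (n := n)]
  exact (pderiv i).map_natCast n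

variable {𝕜 σ : Type*} [NontriviallyNormedField 𝕜] [Fintype σ] [DecidableEq σ]

theorem hasFDerivAt_eval (F : MvPolynomial σ 𝕜) (x : σ → 𝕜) :
    HasFDerivAt (fun y => eval y F)
      (∑ i, eval x (pderiv i F) • (ContinuousLinearMap.proj i : (σ → 𝕜) →L[𝕜] 𝕜)) x := by
  induction F using MvPolynomial.induction_on with
  | C c =>
    simp only [eval_C]
    refine (hasFDerivAt_const (𝕜 := 𝕜) c x).congr_fderiv ?_
    ext v
    simp
  | add F G hF hG =>
    simp only [eval_add]
    refine (hF.fun_add hG).congr_fderiv ?_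
    ext v
    simp [add_mul, Finset.sum_add_distrib]
  | mul_X F n hF =>
    simp only [eval_mul, eval_X]
    refine (hF.fun_mul (hasFDerivAt_apply n x)).congr_fderiv ?_
    ext v
    simp [Finset.sum_add_distrib, add_mul, Pi.single_apply, Finset.mul_sum, apply_ite, ite_mul,
      mul_assoc]

end MvPolynomial

theorem fderiv_eval_finTwo_apply {𝕜 : Type*} [NontriviallyNormedField 𝕜]
    (F : MvPolynomial (Fin 2) 𝕜) (p v : 𝕜 × 𝕜) :
    fderiv 𝕜 (fun p : 𝕜 × 𝕜 => eval ![p.1, p.2] F) p v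
      = eval ![p.1, p.2] (pderiv 0 F) * v.1 + eval ![p.1, p.2] (pderiv 1 F) * v.2 := by
  let e : 𝕜 × 𝕜 →L[𝕜] Fin 2 → 𝕜 := (ContinuousLinearEquiv.finTwoArrow 𝕜 𝕜).symm
  have h : HasFDerivAt (fun p : 𝕜 × 𝕜 => eval ![p.1, p.2] F) _ p :=
    (hasFDerivAt_eval F (e p)).comp p e.hasFDerivAt
  rw [h.fderiv]
  simp [e, Fin.sum_univ_two]

section Filipstov

variable {R : Type*} [CommRing R] (a : R)

noncomputable def filipstovP : MvPolynomial (Fin 2) R :=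
  6 * (1 + C a) * X 0 + 2 * X 1 - 6 * (2 + C a) * X 0 ^ 2 + 12 * X 0 * X 1

noncomputable def filipstovQ : MvPolynomial (Fin 2) R :=
  15 * (1 + C a) * X 1 + 3 * C a * (1 + C a) * X 0 ^ 2 - 2 * (9 + 5 * C a) * X 0 * X 1
    + 16 * X 1 ^ 2

noncomputable def filipstovQuartic : MvPolynomial (Fin 2) R :=
  3 * (1 + C a) * (C a * X 0 ^ 2 + X 1) ^ 2 + 2 * X 1 ^ 2 * (2 * X 1 - 3 * (1 + C a) * X 0)

noncomputable def filipstovCofactor : MvPolynomial (Fin 2) R :=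
  30 * (1 + C a) - 24 * (2 + C a) * X 0 + 48 * X 1

theorem filipstovQuartic_invariant :
    filipstovP a * pderiv 0 (filipstovQuartic a) + filipstovQ a * pderiv 1 (filipstovQuartic a)
      = filipstovCofactor a * filipstovQuartic a := by
  simp [filipstovP, filipstovQ, filipstovQuartic, filipstovCofactor, pderiv_X]
  ring

end Filipstov

theorem stmt_11_general (a : ℝ)
    (P Q f : ℝ × ℝ → ℝ)
    (hP : ∀ p : ℝ × ℝ, P p = 6 * (1 + a) * p.1 + 2 * p.2 - 6 * (2 + a) * p.1 ^ 2
      + 12 * p.1 * p.2)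
    (hQ : ∀ p : ℝ × ℝ, Q p = 15 * (1 + a) * p.2 + 3 * a * (1 + a) * p.1 ^ 2
      - 2 * (9 + 5 * a) * p.1 * p.2 + 16 * p.2 ^ 2)
    (hf : ∀ p : ℝ × ℝ, f p = 3 * (1 + a) * (a * p.1 ^ 2 + p.2) ^ 2
      + 2 * p.2 ^ 2 * (2 * p.2 - 3 * (1 + a) * p.1)) :
    ∃ k : MvPolynomial (Fin 2) ℝ,
      ∀ p : ℝ × ℝ, P p * fderiv ℝ f p (1, 0) + Q p * fderiv ℝ f p (0, 1)
        = MvPolynomial.eval ![p.1, p.2] k * f p := by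
  obtain rfl : f = fun p => eval ![p.1, p.2] (filipstovQuartic a) :=
    funext fun p => by simp [hf, filipstovQuartic]
  refine ⟨filipstovCofactor a, fun p => ?_⟩
  have hPp : P p = eval ![p.1, p.2] (filipstovP a) := by simp [hP, filipstovP]
  have hQp : Q p = eval ![p.1, p.2] (filipstovQ a) := by simp [hQ, filipstovQ]
  simpa [fderiv_eval_finTwo_apply, hPp, hQp] using
    congrArg (eval ![p.1, p.2]) (filipstovQuartic_invariant a)

/-- For Filipstov's system `ẋ = 6(1+a)x + 2y − 6(2+a)x² + 12xy`,
`ẏ = 15(1+a)y + 3a(1+a)x² − 2(9+5a)xy + 16y²` with `0 < a < 3/13`, the quartic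
`f(x,y) = 3(1+a)(ax² + y)² + 2y²(2y − 3(1+a)x)` defines an invariant algebraic curve:
`P·f_x + Q·f_y = k·f` for some polynomial cofactor `k`. -/
theorem stmt_11 (a : ℝ) (ha1 : 0 < a) (ha2 : a < 3 / 13)
    (P Q f : ℝ × ℝ → ℝ)
    (hP : ∀ p : ℝ × ℝ, P p = 6 * (1 + a) * p.1 + 2 * p.2 - 6 * (2 + a) * p.1 ^ 2
      + 12 * p.1 * p.2)
    (hQ : ∀ p : ℝ × ℝ, Q p = 15 * (1 + a) * p.2 + 3 * a * (1 + a) * p.1 ^ 2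
      - 2 * (9 + 5 * a) * p.1 * p.2 + 16 * p.2 ^ 2)
    (hf : ∀ p : ℝ × ℝ, f p = 3 * (1 + a) * (a * p.1 ^ 2 + p.2) ^ 2
      + 2 * p.2 ^ 2 * (2 * p.2 - 3 * (1 + a) * p.1)) :
    ∃ k : MvPolynomial (Fin 2) ℝ,
      ∀ p : ℝ × ℝ, P p * fderiv ℝ f p (1, 0) + Q p * fderiv ℝ f p (0, 1)
        = MvPolynomial.eval ![p.1, p.2] k * f p :=
  stmt_11_general a P Q f hP hQ hf
end

section
/- For the system u̇ = (u+1)² − 4au²(u−1) + (1−3u)v, v̇ = 2(u+1)(3 + u + 2au − au²) + (1 + 4au + u − 6au²)v − 5v², the curve f(u,v) = v² + 4au²(u−1) − (u+1)² = 0 is invariant with cofactor k(u,v) = 2(1 + u + 4au − 6au² − 5v); that is, P·f_u + Q·f_v = k·f identically in (u,v), for every real a. -/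
open ContinuousLinearMap

theorem hasFDerivAt_invariantCurve (a : ℝ) (p : ℝ × ℝ) :
    HasFDerivAt (fun q : ℝ × ℝ => q.2 ^ 2 + 4 * a * q.1 ^ 2 * (q.1 - 1) - (q.1 + 1) ^ 2)
      ((4 * a * (3 * p.1 ^ 2 - 2 * p.1) - 2 * (p.1 + 1)) • fst ℝ ℝ ℝ
        + (2 * p.2) • snd ℝ ℝ ℝ) p := by
  have hu : HasFDerivAt (fun q : ℝ × ℝ => q.1) (fst ℝ ℝ ℝ) p := hasFDerivAt_fst
  have hv : HasFDerivAt (fun q : ℝ × ℝ => q.2) (snd ℝ ℝ ℝ) p := hasFDerivAt_snd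
  refine (((hv.pow 2).add (((hu.pow 2).const_mul (4 * a)).mul (hu.sub_const 1))).sub
    ((hu.add_const 1).pow 2)).congr_fderiv ?_
  ext <;> simp only [Nat.add_one_sub_one, pow_one, nsmul_eq_mul, Nat.cast_ofNat, smul_add, mul_one,
    smul_zero, add_zero, sub_zero, zero_add, sub_comp, add_comp, smul_comp, fst_comp_inl,
    snd_comp_inl, fst_comp_inr, snd_comp_inr, sub_apply, add_apply, smul_apply, id_apply,
    smul_eq_mul] <;> ring

theorem invariantCurve_cofactor_identity (a u v : ℝ) :
    ((u + 1) ^ 2 - 4 * a * u ^ 2 * (u - 1) + (1 - 3 * u) * v)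
        * (4 * a * (3 * u ^ 2 - 2 * u) - 2 * (u + 1))
      + (2 * (u + 1) * (3 + u + 2 * a * u - a * u ^ 2)
          + (1 + 4 * a * u + u - 6 * a * u ^ 2) * v - 5 * v ^ 2) * (2 * v)
      = 2 * (1 + u + 4 * a * u - 6 * a * u ^ 2 - 5 * v)
          * (v ^ 2 + 4 * a * u ^ 2 * (u - 1) - (u + 1) ^ 2) := by
  ring

/-- For the transformed Chavarriga system
`u̇ = (u+1)² − 4au²(u−1) + (1−3u)v`,
`v̇ = 2(u+1)(3 + u + 2au − au²) + (1 + 4au + u − 6au²)v − 5v²`, the curve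
`f(u,v) = v² + 4au²(u−1) − (u+1)²` is invariant with cofactor
`k(u,v) = 2(1 + u + 4au − 6au² − 5v)`, for every real `a`. -/
theorem stmt_13 (a : ℝ)
    (P Q f k : ℝ × ℝ → ℝ)
    (hP : ∀ p : ℝ × ℝ, P p = (p.1 + 1) ^ 2 - 4 * a * p.1 ^ 2 * (p.1 - 1)
      + (1 - 3 * p.1) * p.2)
    (hQ : ∀ p : ℝ × ℝ, Q p = 2 * (p.1 + 1) * (3 + p.1 + 2 * a * p.1 - a * p.1 ^ 2)
      + (1 + 4 * a * p.1 + p.1 - 6 * a * p.1 ^ 2) * p.2 - 5 * p.2 ^ 2)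
    (hf : ∀ p : ℝ × ℝ, f p = p.2 ^ 2 + 4 * a * p.1 ^ 2 * (p.1 - 1) - (p.1 + 1) ^ 2)
    (hk : ∀ p : ℝ × ℝ, k p = 2 * (1 + p.1 + 4 * a * p.1 - 6 * a * p.1 ^ 2
      - 5 * p.2)) :
    ∀ p : ℝ × ℝ, P p * fderiv ℝ f p (1, 0) + Q p * fderiv ℝ f p (0, 1)
      = k p * f p := by
  intro p
  have hf_eq : f = fun q : ℝ × ℝ => q.2 ^ 2 + 4 * a * q.1 ^ 2 * (q.1 - 1) - (q.1 + 1) ^ 2 :=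
    funext hf
  have hf_deriv := hasFDerivAt_invariantCurve a p
  rw [← hf_eq] at hf_deriv
  rw [hf_deriv.fderiv, hP, hQ, hk, hf]
  simpa using invariantCurve_cofactor_identity a p.1 p.2
end

section
/- For (17√17 − 71)/32 < a < 0 with g(a,τ) = 4aτ²(1−τ) + (τ+1)², and τ₁ < τ₂ the two smallest roots of g(a,·) (so τ₁ < −(3+√17)/2 < τ₂ < −1), the integral ∫_{τ₁}^{τ₂} √(g(a,τ)) / ((τ−1)·τ·(aτ+2)) dτ is well defined and strictly positive. -/
/-- For `(17√17 − 71)/32 < a < 0`, `g(a,τ) = 4aτ²(1−τ) + (τ+1)²`, and `τ₁ < τ₂` the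
two smallest roots of `g(a,·)` (which satisfy `τ₁ < −(3+√17)/2 < τ₂ < −1`), the
integral `∫_{τ₁}^{τ₂} √(g(a,τ)) / ((τ−1)·τ·(aτ+2)) dτ` is well defined and strictly
positive. -/
theorem stmt_17 (a : ℝ)
    (ha1 : (17 * Real.sqrt 17 - 71) / 32 < a) (ha2 : a < 0)
    (g : ℝ → ℝ → ℝ)
    (hg : ∀ a' τ : ℝ, g a' τ = 4 * a' * τ ^ 2 * (1 - τ) + (τ + 1) ^ 2)
    (τ₁ τ₂ : ℝ) (h₁ : g a τ₁ = 0) (h₂ : g a τ₂ = 0) (h₁₂ : τ₁ < τ₂)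
    (hsmall : ∀ τ : ℝ, g a τ = 0 → τ = τ₁ ∨ τ = τ₂ ∨ τ₂ < τ)
    (hb1 : τ₁ < -(3 + Real.sqrt 17) / 2)
    (hb2 : -(3 + Real.sqrt 17) / 2 < τ₂) (hb3 : τ₂ < -1) :
    IntervalIntegrable
      (fun τ => Real.sqrt (g a τ) / ((τ - 1) * τ * (a * τ + 2)))
      MeasureTheory.volume τ₁ τ₂ ∧
    0 < ∫ τ in τ₁..τ₂, Real.sqrt (g a τ) / ((τ - 1) * τ * (a * τ + 2)) := by
  have hs : Real.sqrt 17 ^ 2 = 17 := Real.sq_sqrt (by norm_num)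
  have hs0 : (0:ℝ) < Real.sqrt 17 := Real.sqrt_pos.mpr (by norm_num)
  set c : ℝ := -(3 + Real.sqrt 17) / 2 with hc
  -- g is positive at the midpoint c
  have hgc : 0 < g a c := by
    rw [hg, hc]
    have hcoef : (0:ℝ) < 116 + 28 * Real.sqrt 17 := by positivity
    nlinarith [mul_pos (sub_pos.mpr ha1) hcoef, hs, hs0]
  -- denominator positive on Icc
  have hden : ∀ τ ∈ Set.Icc τ₁ τ₂, 0 < (τ - 1) * τ * (a * τ + 2) := by
    intro τ hτ
    have h1 : τ < -1 := lt_of_le_of_lt hτ.2 hb3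
    have h2 : 0 < a * τ := mul_pos_of_neg_of_neg ha2 (by linarith)
    exact mul_pos (mul_pos_of_neg_of_neg (by linarith) (by linarith)) (by linarith)
  have hcg : Continuous (fun τ => g a τ) := by
    simp only [hg]; fun_prop
  -- g positive on the open interval
  have hgpos : ∀ τ ∈ Set.Ioo τ₁ τ₂, 0 < g a τ := by
    intro τ hτ
    by_contra h
    push_neg at h
    rcases h.lt_or_eq with hlt | heq
    · -- g a τ < 0, use IVT between τ and c
      have hsub : Set.uIcc (g a τ) (g a c) ⊆ (fun t => g a t) '' Set.uIcc τ c :=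
        intermediate_value_uIcc hcg.continuousOn
      have h0 : (0:ℝ) ∈ Set.uIcc (g a τ) (g a c) :=
        Set.mem_uIcc.mpr (Or.inl ⟨hlt.le, hgc.le⟩)
      obtain ⟨z, hz, hz0⟩ := hsub h0
      have hzb := Set.mem_uIcc.mp hz
      have hz1 : τ₁ < z := by rcases hzb with ⟨h', _⟩ | ⟨h', _⟩ <;> [linarith [hτ.1]; linarith [hb1]]
      have hz2 : z < τ₂ := by rcases hzb with ⟨_, h'⟩ | ⟨_, h'⟩ <;> [linarith [hb2]; linarith [hτ.2]]
      rcases hsmall z hz0 with rfl | rfl | h' <;> linarith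
    · rcases hsmall τ heq with rfl | rfl | h' <;>
        [exact lt_irrefl _ hτ.1; exact lt_irrefl _ hτ.2; linarith [hτ.2]]
  have hcont : ContinuousOn
      (fun τ => Real.sqrt (g a τ) / ((τ - 1) * τ * (a * τ + 2))) (Set.Icc τ₁ τ₂) := by
    apply ContinuousOn.div
    · exact (hcg.sqrt).continuousOn
    · fun_prop
    · exact fun τ hτ => (hden τ hτ).ne'
  have hInt : IntervalIntegrable
      (fun τ => Real.sqrt (g a τ) / ((τ - 1) * τ * (a * τ + 2)))
      MeasureTheory.volume τ₁ τ₂ := by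
    apply ContinuousOn.intervalIntegrable
    rwa [Set.uIcc_of_le h₁₂.le]
  refine ⟨hInt, ?_⟩
  apply intervalIntegral.intervalIntegral_pos_of_pos_on hInt _ h₁₂
  intro τ hτ
  exact div_pos (Real.sqrt_pos.mpr (hgpos τ hτ)) (hden τ (Set.Ioo_subset_Icc_self hτ))
end

section
/- Let div(x,y) = 2(2 − 5ax − 2y) and k(x,y) = 4(2 − 3ax + 2y). For 0 < a < 1/4 and the parameterization y_±(τ) = (−1 ± 2√(aτ(τ−τ₁)(τ₂−τ)))/(2τ) of the oval of 1/4 + x − x² + ax³ + xy + x²y² = 0 with P(x,y) = 2(1 + 2x − 2ax² + 6xy), the following algebraic identity holds for all τ ∈ (τ₁, τ₂): ((−2·div + 3k)/P)(τ, y₊(τ)) − ((−2·div + 3k)/P)(τ, y₋(τ)) = 8√(aτ(τ−τ₁)(τ₂−τ)) / (τ(1 + 8τ + aτ²)). -/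
/-!
Since `τ₁, τ₂` are the roots of `aτ² − τ + 1`, the radicand `aτ(τ−τ₁)(τ₂−τ)` equals `τu` with
`u = τ − aτ² − 1 > 0`, and `s = √(τu)`. Along the two branches `2τy = −1 ± 2s` the numerator
`−2·div + 3k` becomes `16(u ± 2s)/τ` and `P` becomes `4(u ± 3s)`, so the difference of the two
quotients has numerator `−8us/τ` over `u² − 9s² = u(u − 9τ) = −u(1 + 8τ + aτ²)`.
-/

open Real

lemma mul_sub_mul_sub_eq_of_quadratic_roots {a : ℝ} (ha : a ≠ 0) (hdisc : 0 ≤ 1 - 4 * a)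
    (τ : ℝ) :
    a * (τ - (1 - √(1 - 4 * a)) / (2 * a)) * ((1 + √(1 - 4 * a)) / (2 * a) - τ)
      = τ - a * τ ^ 2 - 1 := by
  have hsq := sq_sqrt hdisc
  set r := √(1 - 4 * a)
  field_simp
  linear_combination hsq

lemma smaller_quadratic_root_pos {a : ℝ} (ha : 0 < a) : 0 < (1 - √(1 - 4 * a)) / (2 * a) := by
  have : √(1 - 4 * a) < 1 := by
    rw [sqrt_lt' one_pos]
    linarith
  apply div_pos <;> linarith

lemma combination_div_eq_of_branch {a τ y t : ℝ} (hτ : τ ≠ 0) (hy : 2 * τ * y = -1 + 2 * t) :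
    (-2 * (2 * (2 - 5 * a * τ - 2 * y)) + 3 * (4 * (2 - 3 * a * τ + 2 * y)))
        / (2 * (1 + 2 * τ - 2 * a * τ ^ 2 + 6 * τ * y))
      = 4 * (τ - a * τ ^ 2 - 1 + 2 * t) / (τ * (τ - a * τ ^ 2 - 1 + 3 * t)) := by
  have hnum : -2 * (2 * (2 - 5 * a * τ - 2 * y)) + 3 * (4 * (2 - 3 * a * τ + 2 * y))
      = 16 * (τ - a * τ ^ 2 - 1 + 2 * t) / τ := by
    field_simp
    linear_combination 16 * hy
  have hden : 2 * (1 + 2 * τ - 2 * a * τ ^ 2 + 6 * τ * y) = 4 * (τ - a * τ ^ 2 - 1 + 3 * t) := by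
    linear_combination 6 * hy
  rw [hnum, hden, div_div, mul_left_comm, ← div_div]
  congr 1
  ring

lemma branch_quotient_sub_eq {a τ u s : ℝ} (hτ : τ ≠ 0) (hu : u = τ - a * τ ^ 2 - 1)
    (hu0 : u ≠ 0) (hw : 1 + 8 * τ + a * τ ^ 2 ≠ 0) (hs : s ^ 2 = τ * u) :
    4 * (u + 2 * s) / (τ * (u + 3 * s)) - 4 * (u + 2 * -s) / (τ * (u + 3 * -s))
      = 8 * s / (τ * (1 + 8 * τ + a * τ ^ 2)) := by
  have hprod : (u + 3 * s) * (u + 3 * -s) = -u * (1 + 8 * τ + a * τ ^ 2) := by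
    rw [hu] at hs ⊢
    linear_combination -9 * hs
  have hprod0 : (u + 3 * s) * (u + 3 * -s) ≠ 0 := by
    rw [hprod]
    exact mul_ne_zero (neg_ne_zero.mpr hu0) hw
  have hplus : u + 3 * s ≠ 0 := left_ne_zero_of_mul hprod0
  have hminus : u + 3 * -s ≠ 0 := right_ne_zero_of_mul hprod0
  rw [div_sub_div _ _ (mul_ne_zero hτ hplus) (mul_ne_zero hτ hminus),
    div_eq_div_iff (mul_ne_zero (mul_ne_zero hτ hplus) (mul_ne_zero hτ hminus)) (mul_ne_zero hτ hw)]
  linear_combination (-8 * s * τ ^ 2) * hprod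

/-- For `0 < a < 1/4`, with `div(x,y) = 2(2 − 5ax − 2y)`, `k(x,y) = 4(2 − 3ax + 2y)`,
`P(x,y) = 2(1 + 2x − 2ax² + 6xy)`, and the parameterizations
`y_±(τ) = (−1 ± 2√(aτ(τ−τ₁)(τ₂−τ)))/(2τ)` of the oval, one has for all
`τ ∈ (τ₁, τ₂)`:
`((−2·div + 3k)/P)(τ, y₊(τ)) − ((−2·div + 3k)/P)(τ, y₋(τ))
  = 8√(aτ(τ−τ₁)(τ₂−τ)) / (τ(1 + 8τ + aτ²))`. -/
theorem stmt_19 (a : ℝ) (ha1 : 0 < a) (ha2 : a < 1 / 4)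
    (τ₁ τ₂ : ℝ)
    (hτ₁ : τ₁ = (1 - Real.sqrt (1 - 4 * a)) / (2 * a))
    (hτ₂ : τ₂ = (1 + Real.sqrt (1 - 4 * a)) / (2 * a))
    (dv k P : ℝ × ℝ → ℝ)
    (hdv : ∀ p : ℝ × ℝ, dv p = 2 * (2 - 5 * a * p.1 - 2 * p.2))
    (hk : ∀ p : ℝ × ℝ, k p = 4 * (2 - 3 * a * p.1 + 2 * p.2))
    (hP : ∀ p : ℝ × ℝ, P p = 2 * (1 + 2 * p.1 - 2 * a * p.1 ^ 2 + 6 * p.1 * p.2))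
    (yp ym : ℝ → ℝ)
    (hyp : ∀ τ, yp τ = (-1 + 2 * Real.sqrt (a * τ * (τ - τ₁) * (τ₂ - τ)))
      / (2 * τ))
    (hym : ∀ τ, ym τ = (-1 - 2 * Real.sqrt (a * τ * (τ - τ₁) * (τ₂ - τ)))
      / (2 * τ)) :
    ∀ τ ∈ Set.Ioo τ₁ τ₂,
      (-2 * dv (τ, yp τ) + 3 * k (τ, yp τ)) / P (τ, yp τ)
        - (-2 * dv (τ, ym τ) + 3 * k (τ, ym τ)) / P (τ, ym τ)
      = 8 * Real.sqrt (a * τ * (τ - τ₁) * (τ₂ - τ))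
          / (τ * (1 + 8 * τ + a * τ ^ 2)) := by
  rintro τ ⟨hτ₁τ, hττ₂⟩
  have hτ : 0 < τ := (hτ₁ ▸ smaller_quadratic_root_pos ha1).trans hτ₁τ
  have hfactor : a * (τ - τ₁) * (τ₂ - τ) = τ - a * τ ^ 2 - 1 := by
    rw [hτ₁, hτ₂]
    exact mul_sub_mul_sub_eq_of_quadratic_roots ha1.ne' (by linarith) τ
  have hu : 0 < τ - a * τ ^ 2 - 1 :=
    hfactor ▸ mul_pos (mul_pos ha1 (by linarith)) (by linarith)
  set s := √(a * τ * (τ - τ₁) * (τ₂ - τ))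
  have hs : s ^ 2 = τ * (τ - a * τ ^ 2 - 1) := by
    rw [sq_sqrt (by nlinarith), ← hfactor]
    ring
  have hyp' : 2 * τ * yp τ = -1 + 2 * s := by rw [hyp, mul_div_cancel₀ _ (by positivity)]
  have hym' : 2 * τ * ym τ = -1 + 2 * -s := by
    rw [hym, mul_div_cancel₀ _ (by positivity)]
    ring
  simp only [hdv, hk, hP]
  rw [combination_div_eq_of_branch hτ.ne' hyp', combination_div_eq_of_branch hτ.ne' hym']
  exact branch_quotient_sub_eq hτ.ne' rfl hu.ne' (by positivity) hs
end
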